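/- Let K be a field of characteristic 0, let Q, R ∈ K[x] be nonzero polynomials and let α, β be natural numbers. If A ∈ 𝓔_α(Q) and B ∈ 𝓔_β(R), then the product A·B belongs to 𝓔_γ(QR), where γ = max(α + deg R, β + deg Q). -/

import Mathlib

open Polynomial PowerSeries

/-- `𝓔_α(Q)`: the set of power series in `K(x)[[y]]` of the form
`Σ_n c_n(x) yⁿ / Q(x)ⁿ` with `deg c_n ≤ n·α`. -/
def Ecal (K : Type*) [Field K] (α : ℕ) (Q : Polynomial K) :
    Set (PowerSeries (RatFunc K)) :=
  {A | ∃ c : ℕ → Polynomial K, (∀ n, (c n).natDegree ≤ n * α) ∧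
    ∀ n, PowerSeries.coeff n A =
      algebraMap (Polynomial K) (RatFunc K) (c n) /
        (algebraMap (Polynomial K) (RatFunc K) Q) ^ n}

/-! Bringing `c_i / Qⁱ · d_j / Rʲ` to the common denominator `(QR)^(i+j)` gives the numerator
`c_i d_j Rⁱ Qʲ`, of degree at most `i(α + deg R) + j(β + deg Q) ≤ (i + j)γ`; summing over
`i + j = n` yields the `n`-th numerator of `A·B`. -/

theorem div_pow_mul_div_pow {F : Type*} [Field F] {q r : F} (hq : q ≠ 0) (hr : r ≠ 0)
    (a b : F) (i j : ℕ) :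
    a / q ^ i * (b / r ^ j) = a * b * r ^ i * q ^ j / (q * r) ^ (i + j) := by
  rw [div_mul_div_comm, mul_pow, pow_add, pow_add, eq_div_iff (by positivity),
    div_mul_eq_mul_div, div_eq_iff (by positivity)]
  ring

theorem natDegree_mul_mul_pow_mul_pow_le {K : Type*} [Semiring K] {c d Q R : K[X]} {α β i j : ℕ}
    (hc : c.natDegree ≤ i * α) (hd : d.natDegree ≤ j * β) :
    (c * d * R ^ i * Q ^ j).natDegree ≤
      (i + j) * max (α + R.natDegree) (β + Q.natDegree) :=
  calc (c * d * R ^ i * Q ^ j).natDegree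
      ≤ c.natDegree + d.natDegree + (R ^ i).natDegree + (Q ^ j).natDegree :=
        natDegree_mul_le.trans <| by
          gcongr
          exact natDegree_mul_le.trans <| by gcongr; exact natDegree_mul_le
    _ ≤ i * α + j * β + i * R.natDegree + j * Q.natDegree := by
        gcongr <;> exact natDegree_pow_le
    _ = i * (α + R.natDegree) + j * (β + Q.natDegree) := by ring
    _ ≤ i * max (α + R.natDegree) (β + Q.natDegree) +
          j * max (α + R.natDegree) (β + Q.natDegree) := by
        gcongr
        exacts [le_max_left _ _, le_max_right _ _]
    _ = (i + j) * max (α + R.natDegree) (β + Q.natDegree) := (add_mul _ _ _).symm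

theorem Ecal_mul_mem (K : Type*) [Field K]
    (Q R : Polynomial K) (hQ : Q ≠ 0) (hR : R ≠ 0) (α β : ℕ)
    (A B : PowerSeries (RatFunc K)) (hA : A ∈ Ecal K α Q) (hB : B ∈ Ecal K β R) :
    A * B ∈ Ecal K (max (α + R.natDegree) (β + Q.natDegree)) (Q * R) := by
  obtain ⟨c, hc, hcA⟩ := hA
  obtain ⟨d, hd, hdB⟩ := hB
  have hQ' : algebraMap K[X] (RatFunc K) Q ≠ 0 := by simpa using hQ
  have hR' : algebraMap K[X] (RatFunc K) R ≠ 0 := by simpa using hR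
  refine ⟨fun n => ∑ p ∈ Finset.HasAntidiagonal.antidiagonal n, c p.1 * d p.2 * R ^ p.1 * Q ^ p.2,
    fun n => ?_, fun n => ?_⟩
  · refine natDegree_sum_le_of_forall_le _ _ fun p hp => ?_
    rw [← Finset.HasAntidiagonal.mem_antidiagonal.mp hp]
    exact natDegree_mul_mul_pow_mul_pow_le (hc p.1) (hd p.2)
  · rw [PowerSeries.coeff_mul, map_sum, Finset.sum_div]
    refine Finset.sum_congr rfl fun p hp => ?_
    rw [hcA, hdB, div_pow_mul_div_pow hQ' hR', Finset.HasAntidiagonal.mem_antidiagonal.mp hp]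
    simp only [map_mul, map_pow]
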